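/- arXiv:1412.8303 — 15 statements merged into one kernel-verified Lean document; each statement's English description precedes it below -/
import Mathlib

section
/- The closure of a t-analytic set is t-analytic: if A is a Banach function algebra on a compact Hausdorff space X and E ⊆ X is t-analytic for A, then the closure of E is also t-analytic for A. -/
open Set

/-- `E` is a t-analytic set for the function algebra `A`: any `f ∈ A` vanishing on a
nonempty relatively open subset of `E` vanishes on all of `E`. -/
def TAnalytic {X : Type*} [TopologicalSpace X] (A : Subalgebra ℂ C(X, ℂ)) (E : Set X) : Prop :=
  ∀ f ∈ A, ∀ U : Set X, IsOpen U → (U ∩ E).Nonempty →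
    (∀ x ∈ U ∩ E, f x = 0) → ∀ x ∈ E, f x = 0

theorem closure_tAnalytic_general {X : Type*} [TopologicalSpace X]
    (A : Subalgebra ℂ C(X, ℂ)) (E : Set X) (hE : TAnalytic A E) :
    TAnalytic A (closure E) := by
  intro f hf U hU hne hvan
  have hUE : (U ∩ E).Nonempty := by
    rwa [inter_comm, ← closure_inter_open_nonempty_iff hU, inter_comm]
  have hf_E : ∀ x ∈ E, f x = 0 :=
    hE f hf U hU hUE fun x hx => hvan x ⟨hx.1, subset_closure hx.2⟩
  exact fun x hx => closure_minimal hf_E (isClosed_singleton.preimage f.continuous) hx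

theorem closure_tAnalytic {X : Type*} [TopologicalSpace X] [CompactSpace X] [T2Space X]
    (A : Subalgebra ℂ C(X, ℂ)) (E : Set X) (hE : TAnalytic A E) :
    TAnalytic A (closure E) :=
  closure_tAnalytic_general A E hE
end

section
/- If C is a connected open subset of X which is a union of open sets C_λ each of which is t-analytic for A, then C is t-analytic for A. -/
/-!
Let `f ∈ A` vanish on a nonempty relatively open part of `C`, and let `Z` be the interior of the
zero set of `f`. By t-analyticity, every piece `C_λ` meeting `Z` lies in `Z`, and some piece
meets `Z`. So `C ∩ Z` and the union of the pieces missing `Z` split `C` into two disjoint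
relatively open sets, and connectedness of `C` forces `C ⊆ Z`.
-/

open Set

theorem IsPreconnected.subset_of_cover_of_inter_nonempty_imp_subset {X ι : Type*}
    [TopologicalSpace X] {C S : Set X} (hC : IsPreconnected C) {V : ι → Set X}
    (hV : ∀ i, IsOpen (V i)) (hCV : C ⊆ ⋃ i, V i) (hS : IsOpen S)
    (hVS : ∀ i, (V i ∩ S).Nonempty → V i ⊆ S) (hCS : (C ∩ S).Nonempty) : C ⊆ S := by
  refine hC.subset_left_of_subset_union hS (isOpen_biUnion fun i _ => hV i)
    (disjoint_iUnion₂_right.2 fun i hi => Disjoint.symm hi) ?_ hCS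
  intro x hx
  obtain ⟨i, hxi⟩ := mem_iUnion.1 (hCV hx)
  by_cases hi : (V i ∩ S).Nonempty
  · exact Or.inl (hVS i hi hxi)
  · exact Or.inr (mem_iUnion₂.2 ⟨i, not_disjoint_iff_nonempty_inter.not_right.2 hi, hxi⟩)

theorem TAnalytic.subset_interior_preimage_zero {X : Type*} [TopologicalSpace X]
    {A : Subalgebra ℂ C(X, ℂ)} {E : Set X} (hE : TAnalytic A E) (hEo : IsOpen E)
    {f : C(X, ℂ)} (hf : f ∈ A) {U : Set X} (hU : IsOpen U) (hUE : (U ∩ E).Nonempty)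
    (hfU : ∀ x ∈ U ∩ E, f x = 0) : E ⊆ interior (f ⁻¹' {0}) :=
  interior_maximal (hE f hf U hU hUE hfU) hEo

theorem tAnalytic_of_union_open_general {X : Type*} [TopologicalSpace X]
    (A : Subalgebra ℂ C(X, ℂ)) {ι : Type*} (C : Set X) (Cf : ι → Set X)
    (hopen : ∀ i, IsOpen (Cf i)) (ht : ∀ i, TAnalytic A (Cf i))
    (hC : C = ⋃ i, Cf i) (hconn : IsConnected C) :
    TAnalytic A C := by
  intro f hf U hU hUC hfU
  set Z := interior (f ⁻¹' {0})
  have hpieces : ∀ i, (Cf i ∩ Z).Nonempty → Cf i ⊆ Z := fun i hi =>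
    (ht i).subset_interior_preimage_zero (hopen i) hf isOpen_interior
      (inter_comm (Cf i) Z ▸ hi) fun _ hx => interior_subset (s := f ⁻¹' {0}) hx.1
  obtain ⟨z, hzU, hzC⟩ := hUC
  obtain ⟨i, hzi⟩ := mem_iUnion.1 (hC ▸ hzC)
  have hzZ : z ∈ Z :=
    (ht i).subset_interior_preimage_zero (hopen i) hf hU ⟨z, hzU, hzi⟩
      (fun x hx => hfU x ⟨hx.1, hC ▸ mem_iUnion_of_mem i hx.2⟩) hzi
  have hCZ : C ⊆ Z := hconn.isPreconnected.subset_of_cover_of_inter_nonempty_imp_subset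
    hopen hC.subset isOpen_interior hpieces ⟨z, hzC, hzZ⟩
  exact fun _ hx => interior_subset (s := f ⁻¹' {0}) (hCZ hx)

theorem tAnalytic_of_union_open {X : Type*} [TopologicalSpace X] [CompactSpace X] [T2Space X]
    (A : Subalgebra ℂ C(X, ℂ)) {ι : Type*} (C : Set X) (Cf : ι → Set X)
    (hopen : ∀ i, IsOpen (Cf i)) (ht : ∀ i, TAnalytic A (Cf i))
    (hC : C = ⋃ i, Cf i) (hconn : IsConnected C) (hCopen : IsOpen C) :
    TAnalytic A C :=
  tAnalytic_of_union_open_general A C Cf hopen ht hC hconn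
end

section
/- If O₁ and O₂ are open t-analytic sets for A with nonempty intersection, then O₁ ∪ O₂ is an open t-analytic set for A. -/
open Set

namespace TAnalytic

variable {X : Type*} [TopologicalSpace X] {A : Subalgebra ℂ C(X, ℂ)} {f : C(X, ℂ)}

theorem eqOn_zero {E U : Set X} (hE : TAnalytic A E) (hf : f ∈ A) (hU : IsOpen U)
    (hUE : (U ∩ E).Nonempty) (hfU : EqOn f 0 (U ∩ E)) : EqOn f 0 E :=
  hE f hf U hU hUE hfU

theorem eqOn_zero_union_of_isOpen {E F : Set X} (hF : TAnalytic A F) (hE : IsOpen E)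
    (hEF : (E ∩ F).Nonempty) (hf : f ∈ A) (hfE : EqOn f 0 E) : EqOn f 0 (E ∪ F) :=
  hfE.union (hF.eqOn_zero hf hE hEF (hfE.mono inter_subset_left))

theorem union_of_isOpen {O₁ O₂ : Set X} (ht₁ : TAnalytic A O₁) (ht₂ : TAnalytic A O₂)
    (h₁ : IsOpen O₁) (h₂ : IsOpen O₂) (hne : (O₁ ∩ O₂).Nonempty) :
    TAnalytic A (O₁ ∪ O₂) := by
  intro f hf U hU ⟨x, hxU, hx⟩ (hfU : EqOn f 0 _)
  rcases hx with hx₁ | hx₂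
  · have hfO₁ : EqOn f 0 O₁ :=
      ht₁.eqOn_zero hf hU ⟨x, hxU, hx₁⟩ (hfU.mono (inter_subset_inter_right U subset_union_left))
    exact ht₂.eqOn_zero_union_of_isOpen h₁ hne hf hfO₁
  · have hfO₂ : EqOn f 0 O₂ :=
      ht₂.eqOn_zero hf hU ⟨x, hxU, hx₂⟩ (hfU.mono (inter_subset_inter_right U subset_union_right))
    rw [union_comm]
    exact ht₁.eqOn_zero_union_of_isOpen h₂ (inter_comm O₁ O₂ ▸ hne) hf hfO₂

end TAnalytic

theorem tAnalytic_union_of_open_inter_general {X : Type*} [TopologicalSpace X]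
    (A : Subalgebra ℂ C(X, ℂ)) (O₁ O₂ : Set X)
    (h₁ : IsOpen O₁) (h₂ : IsOpen O₂) (ht₁ : TAnalytic A O₁) (ht₂ : TAnalytic A O₂)
    (hne : (O₁ ∩ O₂).Nonempty) :
    IsOpen (O₁ ∪ O₂) ∧ TAnalytic A (O₁ ∪ O₂) :=
  ⟨h₁.union h₂, ht₁.union_of_isOpen ht₂ h₁ h₂ hne⟩

theorem tAnalytic_union_of_open_inter {X : Type*} [TopologicalSpace X] [CompactSpace X]
    [T2Space X] (A : Subalgebra ℂ C(X, ℂ)) (O₁ O₂ : Set X)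
    (h₁ : IsOpen O₁) (h₂ : IsOpen O₂) (ht₁ : TAnalytic A O₁) (ht₂ : TAnalytic A O₂)
    (hne : (O₁ ∩ O₂).Nonempty) :
    IsOpen (O₁ ∪ O₂) ∧ TAnalytic A (O₁ ∪ O₂) :=
  tAnalytic_union_of_open_inter_general A O₁ O₂ h₁ h₂ ht₁ ht₂ hne
end

section
/- Every t-analytic set for A is contained in at least one maximal t-analytic set for A, and every maximal t-analytic set is closed. -/
open Set

namespace TAnalytic

variable {X : Type*} [TopologicalSpace X] {A : Subalgebra ℂ C(X, ℂ)}

theorem sUnion_of_directedOn {c : Set (Set X)} (hc : DirectedOn (· ⊆ ·) c)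
    (h : ∀ M ∈ c, TAnalytic A M) : TAnalytic A (⋃₀ c) := by
  rintro f hf U hU ⟨y, hyU, M₀, hM₀, hyM₀⟩ hvan x ⟨M, hM, hxM⟩
  obtain ⟨N, hN, hM₀N, hMN⟩ := hc M₀ hM₀ M hM
  exact h N hN f hf U hU ⟨y, hyU, hM₀N hyM₀⟩
    (fun z hz => hvan z ⟨hz.1, subset_sUnion_of_mem hN hz.2⟩) x (hMN hxM)

protected theorem closure {M : Set X} (hM : TAnalytic A M) : TAnalytic A (closure M) := by
  intro f hf U hU ⟨y, hyU, hyM⟩ hvan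
  have hfM : ∀ x ∈ M, f x = 0 :=
    hM f hf U hU (mem_closure_iff.mp hyM U hU hyU)
      (fun z hz => hvan z ⟨hz.1, subset_closure hz.2⟩)
  exact closure_minimal hfM (isClosed_singleton.preimage f.continuous)

theorem exists_subset_maximal {E : Set X} (hE : TAnalytic A E) :
    ∃ M, E ⊆ M ∧ Maximal (TAnalytic A) M :=
  zorn_subset_nonempty {M | TAnalytic A M}
    (fun c hcA hc _ => ⟨⋃₀ c, sUnion_of_directedOn hc.directedOn hcA,
      fun _ => subset_sUnion_of_mem⟩) E hE

theorem isClosed_of_maximal {M : Set X} (hM : Maximal (TAnalytic A) M) : IsClosed M :=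
  closure_eq_iff_isClosed.mp (hM.eq_of_subset hM.prop.closure subset_closure).symm

end TAnalytic

theorem exists_maximal_tAnalytic_general {X : Type*} [TopologicalSpace X]
    (A : Subalgebra ℂ C(X, ℂ)) :
    (∀ E : Set X, TAnalytic A E →
      ∃ M : Set X, TAnalytic A M ∧ E ⊆ M ∧
        ∀ M' : Set X, TAnalytic A M' → M ⊆ M' → M' = M) ∧
    (∀ M : Set X, TAnalytic A M →
      (∀ M' : Set X, TAnalytic A M' → M ⊆ M' → M' = M) → IsClosed M) := by
  refine ⟨fun E hE => ?_, fun M hM hmax => ?_⟩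
  · obtain ⟨M, hEM, hM⟩ := hE.exists_subset_maximal
    exact ⟨M, hM.prop, hEM, fun M' hM' hMM' => (hM.le_of_ge hM' hMM').antisymm hMM'⟩
  · exact TAnalytic.isClosed_of_maximal ⟨hM, fun M' hM' hMM' => (hmax M' hM' hMM').le⟩

theorem exists_maximal_tAnalytic {X : Type*} [TopologicalSpace X] [CompactSpace X] [T2Space X]
    (A : Subalgebra ℂ C(X, ℂ)) :
    (∀ E : Set X, TAnalytic A E →
      ∃ M : Set X, TAnalytic A M ∧ E ⊆ M ∧
        ∀ M' : Set X, TAnalytic A M' → M ⊆ M' → M' = M) ∧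
    (∀ M : Set X, TAnalytic A M →
      (∀ M' : Set X, TAnalytic A M' → M ⊆ M' → M' = M) → IsClosed M) :=
  exists_maximal_tAnalytic_general A
end

section
/- The union of a nonempty chain (totally ordered family under inclusion) of t-analytic sets for A is again a t-analytic set for A. -/
open Set

theorem TAnalytic.sUnion_of_directedOn_s5 {X : Type*} [TopologicalSpace X]
    {A : Subalgebra ℂ C(X, ℂ)} {S : Set (Set X)} (hS : DirectedOn (· ⊆ ·) S)
    (ht : ∀ E ∈ S, TAnalytic A E) : TAnalytic A (⋃₀ S) := by
  intro f hf U hU ⟨y, hyU, F, hFS, hyF⟩ hvan x ⟨E, hES, hxE⟩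
  obtain ⟨G, hGS, hEG, hFG⟩ := hS E hES F hFS
  exact ht G hGS f hf U hU ⟨y, hyU, hFG hyF⟩
    (fun z hz => hvan z ⟨hz.1, G, hGS, hz.2⟩) x (hEG hxE)

theorem tAnalytic_sUnion_chain_general {X : Type*} [TopologicalSpace X]
    (A : Subalgebra ℂ C(X, ℂ)) (S : Set (Set X))
    (hchain : IsChain (· ⊆ ·) S) (ht : ∀ E ∈ S, TAnalytic A E) :
    TAnalytic A (⋃₀ S) :=
  TAnalytic.sUnion_of_directedOn_s5 hchain.directedOn ht

theorem tAnalytic_sUnion_chain {X : Type*} [TopologicalSpace X] [CompactSpace X] [T2Space X]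
    (A : Subalgebra ℂ C(X, ℂ)) (S : Set (Set X)) (hne : S.Nonempty)
    (hchain : IsChain (· ⊆ ·) S) (ht : ∀ E ∈ S, TAnalytic A E) :
    TAnalytic A (⋃₀ S) :=
  tAnalytic_sUnion_chain_general A S hchain ht
end

section
/- If E ⊆ X is a nonempty t-analytic set for A, then the ideal I_A(E) = { f ∈ A : f ≡ 0 on E } is a prime ideal of A (and it is closed when A carries a norm in which evaluation is continuous). -/
/-! If `f * g` vanishes on `E` but `f` does not, then `g` vanishes on the nonempty relatively open
part of `E` where `f ≠ 0`, hence on all of `E` by t-analyticity. Closedness holds because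
evaluation at each point is continuous. -/

open Set

theorem TAnalytic.eqOn_zero_or_eqOn_zero_of_mul {X : Type*} [TopologicalSpace X]
    {A : Subalgebra ℂ C(X, ℂ)} {E : Set X} (hE : TAnalytic A E) {f g : C(X, ℂ)} (hg : g ∈ A)
    (hfg : ∀ x ∈ E, f x * g x = 0) : (∀ x ∈ E, f x = 0) ∨ ∀ x ∈ E, g x = 0 := by
  refine or_iff_not_imp_left.2 fun hf => ?_
  obtain ⟨x₀, hx₀E, hfx₀⟩ := not_forall₂.1 hf
  refine hE g hg {x | f x ≠ 0} (isOpen_ne_fun f.continuous continuous_const)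
    ⟨x₀, hfx₀, hx₀E⟩ ?_
  rintro x ⟨hfx, hxE⟩
  exact (mul_eq_zero.mp (hfg x hxE)).resolve_left hfx

theorem ContinuousMap.isClosed_setOf_forall_mem_eq_zero {X Y : Type*} [TopologicalSpace X]
    [TopologicalSpace Y] [Zero Y] [T1Space Y] (E : Set X) :
    IsClosed {f : C(X, Y) | ∀ x ∈ E, f x = 0} := by
  simp only [ofPred_forall]
  exact isClosed_biInter fun x _ => isClosed_singleton.preimage (continuous_eval_const x)

theorem tAnalytic_ideal_prime_general {X : Type*} [TopologicalSpace X]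
    (A : Subalgebra ℂ C(X, ℂ)) (E : Set X) (hne : E.Nonempty) (hE : TAnalytic A E) :
    (∀ f g : C(X, ℂ), f ∈ A → g ∈ A → (∀ x ∈ E, f x * g x = 0) →
      (∀ x ∈ E, f x = 0) ∨ (∀ x ∈ E, g x = 0)) ∧
    ¬ (∀ x ∈ E, (1 : C(X, ℂ)) x = 0) ∧
    IsClosed {f : C(X, ℂ) | ∀ x ∈ E, f x = 0} :=
  ⟨fun _ _ _ hg hfg => hE.eqOn_zero_or_eqOn_zero_of_mul hg hfg,
    fun h => hne.elim fun x hx => one_ne_zero (h x hx),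
    ContinuousMap.isClosed_setOf_forall_mem_eq_zero E⟩

theorem tAnalytic_ideal_prime {X : Type*} [TopologicalSpace X] [CompactSpace X] [T2Space X]
    (A : Subalgebra ℂ C(X, ℂ)) (E : Set X) (hne : E.Nonempty) (hE : TAnalytic A E) :
    (∀ f g : C(X, ℂ), f ∈ A → g ∈ A → (∀ x ∈ E, f x * g x = 0) →
      (∀ x ∈ E, f x = 0) ∨ (∀ x ∈ E, g x = 0)) ∧
    ¬ (∀ x ∈ E, (1 : C(X, ℂ)) x = 0) ∧
    IsClosed {f : C(X, ℂ) | ∀ x ∈ E, f x = 0} :=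
  tAnalytic_ideal_prime_general A E hne hE
end

section
/- If E is a t-analytic set for A with at least two points and x ∈ E, then x is not a regularity point of type one for A; i.e., there exists a neighborhood V of x such that every f ∈ A with support contained in V satisfies f(x) ≠ 1 (equivalently, no f ∈ A has f(x) = 1 and supp f ⊆ V). -/
open Set

theorem TAnalytic.eq_zero_of_disjoint_tsupport {X : Type*} [TopologicalSpace X]
    {A : Subalgebra ℂ C(X, ℂ)} {E : Set X} (hE : TAnalytic A E) {f : C(X, ℂ)} (hf : f ∈ A)
    {W : Set X} (hW : IsOpen W) (hWE : (W ∩ E).Nonempty) (hdisj : Disjoint (tsupport f) W) :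
    ∀ x ∈ E, f x = 0 :=
  hE f hf W hW hWE fun _ hy => image_eq_zero_of_notMem_tsupport (hdisj.notMem_of_mem_right hy.1)

theorem not_regularity_point_type_one_general {X : Type*} [TopologicalSpace X]
    [T2Space X] (A : Subalgebra ℂ C(X, ℂ)) (E : Set X) (hE : TAnalytic A E)
    (htwo : ∃ a ∈ E, ∃ b ∈ E, a ≠ b) (x : X) (hx : x ∈ E) :
    ∃ V ∈ nhds x, ∀ f ∈ A, closure {y | f y ≠ 0} ⊆ V → f x ≠ 1 := by
  obtain ⟨c, hcE, hcx⟩ := Set.Nontrivial.exists_ne htwo x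
  obtain ⟨V, W, hV, hW, hxV, hcW, hVW⟩ := t2_separation hcx.symm
  refine ⟨V, hV.mem_nhds hxV, fun f hf hsupp hfx => ?_⟩
  have hfx_zero : f x = 0 :=
    hE.eq_zero_of_disjoint_tsupport hf hW ⟨c, hcW, hcE⟩ (hVW.mono_left hsupp) x hx
  exact one_ne_zero (hfx.symm.trans hfx_zero)

theorem not_regularity_point_type_one {X : Type*} [TopologicalSpace X] [CompactSpace X]
    [T2Space X] (A : Subalgebra ℂ C(X, ℂ)) (E : Set X) (hE : TAnalytic A E)
    (htwo : ∃ a ∈ E, ∃ b ∈ E, a ≠ b) (x : X) (hx : x ∈ E) :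
    ∃ V ∈ nhds x, ∀ f ∈ A, closure {y | f y ≠ 0} ⊆ V → f x ≠ 1 :=
  not_regularity_point_type_one_general A E hE htwo x hx
end

section
/- If E is a t-analytic set for A with at least two points and x ∈ E, then k_A(x) ≠ {x}; i.e., x is not a regularity point of type two. -/
open Set

/-- The `k`-hull of a point: common zeros of all functions in `A` vanishing near `x`. -/
def kHull {X : Type*} [TopologicalSpace X] (A : Subalgebra ℂ C(X, ℂ)) (x : X) : Set X :=
  {y | ∀ f ∈ A, (∀ᶠ z in nhds x, f z = 0) → f y = 0}

theorem TAnalytic.subset_kHull {X : Type*} [TopologicalSpace X] {A : Subalgebra ℂ C(X, ℂ)}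
    {E : Set X} (hE : TAnalytic A E) {x : X} (hx : x ∈ E) : E ⊆ kHull A x := by
  intro y hy f hf hvanish
  obtain ⟨U, hU, hUopen, hxU⟩ := eventually_nhds_iff.mp hvanish
  exact hE f hf U hUopen ⟨x, hxU, hx⟩ (fun z hz => hU z hz.1) y hy

theorem not_regularity_point_type_two_general {X : Type*} [TopologicalSpace X]
    (A : Subalgebra ℂ C(X, ℂ)) (E : Set X) (hE : TAnalytic A E)
    (htwo : ∃ a ∈ E, ∃ b ∈ E, a ≠ b) (x : X) (hx : x ∈ E) :
    kHull A x ≠ {x} := by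
  intro hk
  obtain ⟨a, ha, b, hb, hab⟩ := htwo
  have hsub : E.Subsingleton := subsingleton_singleton.anti (hk ▸ hE.subset_kHull hx)
  exact hab (hsub ha hb)

theorem not_regularity_point_type_two {X : Type*} [TopologicalSpace X] [CompactSpace X]
    [T2Space X] (A : Subalgebra ℂ C(X, ℂ)) (E : Set X) (hE : TAnalytic A E)
    (htwo : ∃ a ∈ E, ∃ b ∈ E, a ≠ b) (x : X) (hx : x ∈ E) :
    kHull A x ≠ {x} :=
  not_regularity_point_type_two_general A E hE htwo x hx
end

section
/- If A is regular (for all x ∈ X and all closed E ⊆ X \ {x} there is f ∈ A with f ≡ 1 on E and f(x) = 0), then every nonempty t-analytic set for A is a singleton. -/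
open Set

open Filter Topology

section

variable {X : Type*} [TopologicalSpace X] {A : Subalgebra ℂ C(X, ℂ)}

theorem TAnalytic.eqOn_zero_of_eventuallyEq_zero {E : Set X} (hE : TAnalytic A E)
    {f : C(X, ℂ)} (hf : f ∈ A) {y : X} (hy : y ∈ E) (hfy : ⇑f =ᶠ[𝓝 y] 0) :
    EqOn f 0 E := by
  obtain ⟨U, hfU, hU, hyU⟩ := eventually_nhds_iff.mp hfy
  exact hE f hf U hU ⟨y, hyU, hy⟩ (fun z hz => hfU z hz.1)

theorem exists_mem_eventuallyEq_one_of_ne [T2Space X]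
    (hreg : ∀ x : X, ∀ E : Set X, IsClosed E → x ∉ E →
      ∃ f ∈ A, (∀ y ∈ E, f y = 1) ∧ f x = 0)
    {x y : X} (hxy : x ≠ y) :
    ∃ f ∈ A, ⇑f =ᶠ[𝓝 y] 1 ∧ f x = 0 := by
  obtain ⟨U, V, hU, hV, hxU, hyV, hUV⟩ := t2_separation hxy
  obtain ⟨f, hfA, hf1, hfx⟩ := hreg x Uᶜ hU.isClosed_compl (not_not_intro hxU)
  have hVU : V ⊆ Uᶜ := hUV.symm.subset_compl_right
  exact ⟨f, hfA, eventually_of_mem (hV.mem_nhds hyV) fun z hz => hf1 z (hVU hz), hfx⟩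

theorem TAnalytic.subsingleton [T2Space X]
    (hreg : ∀ x : X, ∀ E : Set X, IsClosed E → x ∉ E →
      ∃ f ∈ A, (∀ y ∈ E, f y = 1) ∧ f x = 0)
    {E : Set X} (hE : TAnalytic A E) : E.Subsingleton := by
  intro x hx y hy
  by_contra hxy
  obtain ⟨f, hfA, hf1, hfx⟩ := exists_mem_eventuallyEq_one_of_ne hreg hxy
  have hvanish : ⇑(1 - f) =ᶠ[𝓝 y] 0 := hf1.mono fun z hz => by simp [hz]
  have := hE.eqOn_zero_of_eventuallyEq_zero (sub_mem (one_mem A) hfA) hy hvanish hx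
  simp [hfx] at this

end

theorem regular_tAnalytic_singleton_general {X : Type*} [TopologicalSpace X]
    [T2Space X] (A : Subalgebra ℂ C(X, ℂ))
    (hreg : ∀ x : X, ∀ E : Set X, IsClosed E → x ∉ E →
      ∃ f ∈ A, (∀ y ∈ E, f y = 1) ∧ f x = 0)
    (E : Set X) (hne : E.Nonempty) (hE : TAnalytic A E) :
    ∃ x : X, E = {x} :=
  (exists_eq_singleton_iff_nonempty_subsingleton).mpr ⟨hne, hE.subsingleton hreg⟩

theorem regular_tAnalytic_singleton {X : Type*} [TopologicalSpace X] [CompactSpace X]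
    [T2Space X] (A : Subalgebra ℂ C(X, ℂ))
    (hreg : ∀ x : X, ∀ E : Set X, IsClosed E → x ∉ E →
      ∃ f ∈ A, (∀ y ∈ E, f y = 1) ∧ f x = 0)
    (E : Set X) (hne : E.Nonempty) (hE : TAnalytic A E) :
    ∃ x : X, E = {x} :=
  regular_tAnalytic_singleton_general A hreg E hne hE
end

section
/- Let E be a closed subset of X and H ⊆ X a hull-kernel closed set (i.e., H equals the set of common zeros of the functions in A vanishing on H). Then E ∪ H is t-analytic for A if and only if (H ⊆ E and E is t-analytic) or (E ⊆ H and H is t-analytic). -/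
open Set

/-- The hull-kernel closure of a set `S`. -/
def hkClosure {X : Type*} [TopologicalSpace X] (A : Subalgebra ℂ C(X, ℂ)) (S : Set X) : Set X :=
  {y | ∀ f ∈ A, (∀ x ∈ S, f x = 0) → f y = 0}

/-! If a point of `H` lies outside the closed set `E`, then `Eᶜ` is an open set meeting `E ∪ H`
only inside `H`. Every `f ∈ A` vanishing on `H` thus vanishes on a nonempty relatively open part
of `E ∪ H`, hence on all of `E` when `E ∪ H` is t-analytic; that is, `E` lies in the hull-kernel
closure of `H`. -/

theorem subset_hkClosure_of_tAnalytic_union {X : Type*} [TopologicalSpace X]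
    {A : Subalgebra ℂ C(X, ℂ)} {E H : Set X} (hEc : IsClosed E) (h : TAnalytic A (E ∪ H))
    (hHE : ¬H ⊆ E) : E ⊆ hkClosure A H := by
  obtain ⟨y, hyH, hyE⟩ := not_subset.mp hHE
  intro x hx f hf hfH
  refine h f hf Eᶜ hEc.isOpen_compl ⟨y, hyE, Or.inr hyH⟩ ?_ x (Or.inl hx)
  rintro z ⟨hzEc, hzE | hzH⟩
  · exact absurd hzE hzEc
  · exact hfH z hzH

theorem tAnalytic_union_hk_general {X : Type*} [TopologicalSpace X]
    (A : Subalgebra ℂ C(X, ℂ)) (E H : Set X) (hEc : IsClosed E)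
    (hH : hkClosure A H = H) :
    TAnalytic A (E ∪ H) ↔ (H ⊆ E ∧ TAnalytic A E) ∨ (E ⊆ H ∧ TAnalytic A H) := by
  constructor
  · intro h
    by_cases hHE : H ⊆ E
    · exact .inl ⟨hHE, union_eq_left.mpr hHE ▸ h⟩
    · have hEH : E ⊆ H := hH ▸ subset_hkClosure_of_tAnalytic_union hEc h hHE
      exact .inr ⟨hEH, union_eq_right.mpr hEH ▸ h⟩
  · rintro (⟨hHE, hE⟩ | ⟨hEH, hHa⟩)
    · rwa [union_eq_left.mpr hHE]
    · rwa [union_eq_right.mpr hEH]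

theorem tAnalytic_union_hk {X : Type*} [TopologicalSpace X] [CompactSpace X] [T2Space X]
    (A : Subalgebra ℂ C(X, ℂ)) (E H : Set X) (hEc : IsClosed E)
    (hH : hkClosure A H = H) :
    TAnalytic A (E ∪ H) ↔ (H ⊆ E ∧ TAnalytic A E) ∨ (E ⊆ H ∧ TAnalytic A H) :=
  tAnalytic_union_hk_general A E H hEc hH
end

section
/- Let E₁, E₂ be closed subsets of X such that E₁ ∪ E₂ is t-analytic for A. If E₁ is not contained in E₂, then E₂ is contained in the hull-kernel closure of E₁ (i.e., every f ∈ A vanishing identically on E₁ vanishes identically on E₂). -/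
open Set

/-- `E \ F` is a nonempty relatively open subset of `E`. -/
theorem TAnalytic.eq_zero_of_forall_diff_eq_zero {X : Type*} [TopologicalSpace X]
    {A : Subalgebra ℂ C(X, ℂ)} {E F : Set X} (hE : TAnalytic A E) (hF : IsClosed F)
    (hEF : ¬ E ⊆ F) {f : C(X, ℂ)} (hf : f ∈ A) (hvan : ∀ x ∈ E \ F, f x = 0) :
    ∀ x ∈ E, f x = 0 := by
  obtain ⟨x₀, hx₀E, hx₀F⟩ := not_subset.mp hEF
  refine hE f hf Fᶜ hF.isOpen_compl ⟨x₀, hx₀F, hx₀E⟩ ?_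
  rintro x ⟨hxF, hxE⟩
  exact hvan x ⟨hxE, hxF⟩

theorem subset_hkClosure_of_union_tAnalytic_general {X : Type*} [TopologicalSpace X]
    (A : Subalgebra ℂ C(X, ℂ)) (E₁ E₂ : Set X)
    (h₂ : IsClosed E₂) (ht : TAnalytic A (E₁ ∪ E₂))
    (hns : ¬ E₁ ⊆ E₂) :
    E₂ ⊆ hkClosure A E₁ := by
  intro y hy f hf hvan
  have hunion : ¬ E₁ ∪ E₂ ⊆ E₂ := fun h => hns (subset_union_left.trans h)
  refine ht.eq_zero_of_forall_diff_eq_zero h₂ hunion hf ?_ y (Or.inr hy)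
  rintro x ⟨hx, hx₂⟩
  exact hvan x (hx.resolve_right hx₂)

theorem subset_hkClosure_of_union_tAnalytic {X : Type*} [TopologicalSpace X] [CompactSpace X]
    [T2Space X] (A : Subalgebra ℂ C(X, ℂ)) (E₁ E₂ : Set X)
    (h₁ : IsClosed E₁) (h₂ : IsClosed E₂) (ht : TAnalytic A (E₁ ∪ E₂))
    (hns : ¬ E₁ ⊆ E₂) :
    E₂ ⊆ hkClosure A E₁ :=
  subset_hkClosure_of_union_tAnalytic_general A E₁ E₂ h₂ ht hns
end

section
/- Let E₁, E₂ be closed subsets of X such that E = E₁ ∪ E₂ is t-analytic for A, with neither E₁ ⊆ E₂ nor E₂ ⊆ E₁. Then the hull-kernel closures satisfy Ê = Ê₁ = Ê₂. -/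
/-!
A point `z ∈ E₁ \ E₂` has the neighbourhood `E₂ᶜ`, which meets `E₁ ∪ E₂` only inside `E₁`.
So a function of `A` vanishing on `E₁` vanishes on a nonempty relatively open subset of the
t-analytic set `E₁ ∪ E₂`, hence on all of it. Thus `E₁` and `E₁ ∪ E₂` have the same kernel,
hence the same hull-kernel closure; by symmetry so do `E₂` and `E₁ ∪ E₂`.
-/

open Set

section

variable {X : Type*} [TopologicalSpace X] {A : Subalgebra ℂ C(X, ℂ)}

theorem hkClosure_subset_hkClosure {S T : Set X} (hST : S ⊆ T) :
    hkClosure A S ⊆ hkClosure A T :=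
  fun _ hy f hf hT => hy f hf fun x hx => hT x (hST hx)

theorem hkClosure_eq_of_forall_vanish {S T : Set X} (hST : S ⊆ T)
    (hvan : ∀ f ∈ A, (∀ x ∈ S, f x = 0) → ∀ x ∈ T, f x = 0) :
    hkClosure A S = hkClosure A T :=
  (hkClosure_subset_hkClosure hST).antisymm fun _ hy f hf hS => hy f hf (hvan f hf hS)

theorem TAnalytic.forall_vanish_union_of_vanish_left {E₁ E₂ : Set X}
    (ht : TAnalytic A (E₁ ∪ E₂)) (h₂ : IsClosed E₂) (hns : ¬ E₁ ⊆ E₂) {f : C(X, ℂ)}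
    (hf : f ∈ A) (hvan : ∀ x ∈ E₁, f x = 0) : ∀ x ∈ E₁ ∪ E₂, f x = 0 := by
  obtain ⟨z, hz₁, hz₂⟩ := not_subset.mp hns
  refine ht f hf E₂ᶜ h₂.isOpen_compl ⟨z, hz₂, Or.inl hz₁⟩ ?_
  rintro x ⟨hx₂, hx₁ | hx₂'⟩
  · exact hvan x hx₁
  · exact absurd hx₂' hx₂

theorem TAnalytic.hkClosure_left_eq_union {E₁ E₂ : Set X}
    (ht : TAnalytic A (E₁ ∪ E₂)) (h₂ : IsClosed E₂) (hns : ¬ E₁ ⊆ E₂) :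
    hkClosure A E₁ = hkClosure A (E₁ ∪ E₂) :=
  hkClosure_eq_of_forall_vanish subset_union_left fun _ hf =>
    ht.forall_vanish_union_of_vanish_left h₂ hns hf

end

theorem hkClosure_eq_of_union_tAnalytic_general {X : Type*} [TopologicalSpace X]
    (A : Subalgebra ℂ C(X, ℂ)) (E₁ E₂ : Set X)
    (h₁ : IsClosed E₁) (h₂ : IsClosed E₂) (ht : TAnalytic A (E₁ ∪ E₂))
    (hns₁ : ¬ E₁ ⊆ E₂) (hns₂ : ¬ E₂ ⊆ E₁) :
    hkClosure A (E₁ ∪ E₂) = hkClosure A E₁ ∧ hkClosure A E₁ = hkClosure A E₂ := by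
  have hE₁ : hkClosure A E₁ = hkClosure A (E₁ ∪ E₂) := ht.hkClosure_left_eq_union h₂ hns₁
  have hE₂ : hkClosure A E₂ = hkClosure A (E₁ ∪ E₂) := by
    rw [union_comm] at ht ⊢
    exact ht.hkClosure_left_eq_union h₁ hns₂
  exact ⟨hE₁.symm, hE₁.trans hE₂.symm⟩

theorem hkClosure_eq_of_union_tAnalytic {X : Type*} [TopologicalSpace X] [CompactSpace X]
    [T2Space X] (A : Subalgebra ℂ C(X, ℂ)) (E₁ E₂ : Set X)
    (h₁ : IsClosed E₁) (h₂ : IsClosed E₂) (ht : TAnalytic A (E₁ ∪ E₂))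
    (hns₁ : ¬ E₁ ⊆ E₂) (hns₂ : ¬ E₂ ⊆ E₁) :
    hkClosure A (E₁ ∪ E₂) = hkClosure A E₁ ∧ hkClosure A E₁ = hkClosure A E₂ :=
  hkClosure_eq_of_union_tAnalytic_general A E₁ E₂ h₁ h₂ ht hns₁ hns₂
end

section
/- Let E ⊆ X be a closed t-analytic set for A with at least two points. Then E contains no isolated hull-kernel closed subset: there is no nonempty proper subset S of E, with S hull-kernel closed, such that S and E \ S can be separated by disjoint open sets of X. -/
open Set

/-! A subset of `E` separated from the rest of `E` by open sets is relatively open in `E`, so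
t-analyticity forces its hull-kernel closure to contain all of `E`; a hull-kernel closed such
subset is therefore `E` itself. -/

theorem Set.inter_eq_of_disjoint_of_diff_subset {X : Type*} {S E U V : Set X}
    (hSE : S ⊆ E) (hUV : Disjoint U V) (hSU : S ⊆ U) (hESV : E \ S ⊆ V) : U ∩ E = S := by
  refine Subset.antisymm (fun x ⟨hxU, hxE⟩ => ?_) fun x hx => ⟨hSU hx, hSE hx⟩
  by_contra hxS
  exact disjoint_left.mp hUV hxU (hESV ⟨hxE, hxS⟩)

theorem TAnalytic.subset_hkClosure_inter {X : Type*} [TopologicalSpace X]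
    {A : Subalgebra ℂ C(X, ℂ)} {E : Set X} (hE : TAnalytic A E) {U : Set X} (hU : IsOpen U)
    (hne : (U ∩ E).Nonempty) : E ⊆ hkClosure A (U ∩ E) :=
  fun _ hy f hf hfS => hE f hf U hU hne hfS _ hy

theorem no_isolated_hk_subset_general {X : Type*} [TopologicalSpace X]
    (A : Subalgebra ℂ C(X, ℂ)) (E : Set X) (hE : TAnalytic A E) :
    ¬ ∃ S : Set X, S.Nonempty ∧ S ⊂ E ∧ hkClosure A S = S ∧
      ∃ U V : Set X, IsOpen U ∧ IsOpen V ∧ Disjoint U V ∧ S ⊆ U ∧ E \ S ⊆ V := by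
  rintro ⟨S, hSne, hSE, hhk, U, V, hU, -, hUV, hSU, hESV⟩
  have hUE : U ∩ E = S := inter_eq_of_disjoint_of_diff_subset hSE.subset hUV hSU hESV
  have hEsub : E ⊆ S := by
    simpa only [hUE, hhk] using hE.subset_hkClosure_inter hU (hUE ▸ hSne)
  exact hSE.not_subset hEsub

theorem no_isolated_hk_subset {X : Type*} [TopologicalSpace X] [CompactSpace X] [T2Space X]
    (A : Subalgebra ℂ C(X, ℂ)) (E : Set X) (hEc : IsClosed E) (hE : TAnalytic A E)
    (htwo : ∃ a ∈ E, ∃ b ∈ E, a ≠ b) :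
    ¬ ∃ S : Set X, S.Nonempty ∧ S ⊂ E ∧ hkClosure A S = S ∧
      ∃ U V : Set X, IsOpen U ∧ IsOpen V ∧ Disjoint U V ∧ S ⊆ U ∧ E \ S ⊆ V :=
  no_isolated_hk_subset_general A E hE
end

section
/- Every connected closed subset of the closed unit disk is a t-analytic set for the disk algebra A(𝔻̄). -/
/-!
If `U ∩ E` meets the open disk, then `E`, being connected and not a point, accumulates there and
the identity theorem applies. Otherwise, near a point `z₀ ∈ U ∩ E`, the set `E` lies on the unit
circle, and it contains a nondegenerate arc of the circle inside `U`: if it missed points on both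
sides of `z₀`, the short open arc between them would be relatively clopen in `E`. Finally, a
disk-algebra function `f` vanishing on an arc vanishes identically: finitely many rotations of the
arc cover the circle, so the product of the corresponding rotations of `f` vanishes on the circle,
hence on the disk by the maximum principle, and then one of the factors vanishes on the disk.
-/

open Set Complex

/-- `E` is t-analytic for the algebra `A(K)` of functions continuous on `K` and
holomorphic on the interior of `K`. -/
def TAnalyticOn (K E : Set ℂ) : Prop :=
  ∀ f : ℂ → ℂ, ContinuousOn f K → DifferentiableOn ℂ f (interior K) →
    ∀ U : Set ℂ, IsOpen U → (U ∩ E).Nonempty → (∀ x ∈ U ∩ E, f x = 0) → ∀ x ∈ E, f x = 0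

open Metric Filter Topology

theorem AnalyticOnNhd.exists_eqOn_zero_of_prod_eqOn_zero {𝕜 E ι : Type*}
    [NontriviallyNormedField 𝕜] [NormedAddCommGroup E] [NormedSpace 𝕜 E] {U : Set E}
    (hUo : IsOpen U) (hU : IsPreconnected U) (hne : U.Nonempty) {f : ι → E → 𝕜} (s : Finset ι)
    (hf : ∀ k ∈ s, AnalyticOnNhd 𝕜 (f k) U) (h : EqOn (fun z ↦ ∏ k ∈ s, f k z) 0 U) :
    ∃ k ∈ s, EqOn (f k) 0 U := by
  induction s using Finset.cons_induction with
  | empty =>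
    obtain ⟨z, hz⟩ := hne
    simpa using h hz
  | cons a s has ih =>
    by_cases ha : EqOn (f a) 0 U
    · exact ⟨a, Finset.mem_cons_self a s, ha⟩
    obtain ⟨z₀, hz₀, hfz₀⟩ : ∃ z₀ ∈ U, f a z₀ ≠ 0 := by
      simpa [EqOn] using ha
    have hrest : (fun z ↦ ∏ k ∈ s, f k z) =ᶠ[𝓝 z₀] 0 := by
      filter_upwards [(hf a (Finset.mem_cons_self a s) z₀ hz₀).continuousAt.eventually_ne hfz₀,
        hUo.mem_nhds hz₀] with z hfz hz
      simpa [Finset.prod_cons, hfz] using h hz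
    have hs : ∀ k ∈ s, AnalyticOnNhd 𝕜 (f k) U := fun k hk ↦ hf k (Finset.mem_cons_of_mem hk)
    obtain ⟨k, hk, hfk⟩ := ih hs <|
      (s.analyticOnNhd_fun_prod hs).eqOn_zero_of_preconnected_of_eventuallyEq_zero hU hz₀ hrest
    exact ⟨k, Finset.mem_cons_of_mem hk, hfk⟩

theorem exp_arg_mul_I_of_norm_eq_one {z : ℂ} (hz : ‖z‖ = 1) : exp (arg z * I) = z := by
  simpa [hz] using norm_mul_exp_arg_mul_I z

theorem DiffContOnCl.comp_mul_left_unitBall {f : ℂ → ℂ} (hf : DiffContOnCl ℂ f (ball 0 1))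
    {c : ℂ} (hc : ‖c‖ ≤ 1) : DiffContOnCl ℂ (fun w ↦ f (c * w)) (ball 0 1) :=
  hf.comp (differentiable_id.const_mul c).diffContOnCl fun w hw ↦ by
    rw [mem_ball_zero_iff] at hw ⊢
    rw [norm_mul]
    exact mul_lt_one_of_nonneg_of_lt_one_right hc (norm_nonneg w) hw

theorem exists_int_mul_add_arg_mem_Icc {a ε : ℝ} (hε : 0 < ε) (z : ℂ) :
    ∃ k ∈ Finset.Icc ⌈(a - Real.pi) / ε⌉ ⌈(a + Real.pi) / ε⌉, k * ε + arg z ∈ Icc a (a + ε) := by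
  refine ⟨⌈(a - arg z) / ε⌉, Finset.mem_Icc.2 ⟨?_, ?_⟩, ?_, ?_⟩
  · gcongr
    exact arg_le_pi z
  · gcongr
    linarith [neg_pi_lt_arg z]
  · linarith [(div_le_iff₀ hε).1 (Int.le_ceil ((a - arg z) / ε))]
  · have := Int.ceil_lt_add_one ((a - arg z) / ε)
    rw [← sub_lt_iff_lt_add, lt_div_iff₀ hε] at this
    linarith

theorem DiffContOnCl.eqOn_zero_of_forall_exp_mul_I_eq_zero {f : ℂ → ℂ}
    (hf : DiffContOnCl ℂ f (ball 0 1)) {a b : ℝ} (hab : a < b)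
    (harc : ∀ t ∈ Icc a b, f (exp (t * I)) = 0) :
    EqOn f 0 (ball 0 1) := by
  set ε := b - a
  set K := Finset.Icc ⌈(a - Real.pi) / ε⌉ ⌈(a + Real.pi) / ε⌉
  set g : ℤ → ℂ → ℂ := fun k w ↦ f (exp ((k * ε : ℝ) * I) * w)
  have hg : ∀ k, DiffContOnCl ℂ (g k) (ball 0 1) := fun k ↦
    hf.comp_mul_left_unitBall (norm_exp_ofReal_mul_I _).le
  have hprod_sphere : EqOn (fun w ↦ ∏ k ∈ K, g k w) 0 (sphere 0 1) := by
    intro z hz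
    obtain ⟨k, hk, hkz⟩ := exists_int_mul_add_arg_mem_Icc (a := a) (sub_pos.2 hab) z
    refine Finset.prod_eq_zero hk ?_
    have hrot : exp ((k * ε : ℝ) * I) * z = exp ((k * ε + arg z : ℝ) * I) := by
      conv_lhs => rw [← exp_arg_mul_I_of_norm_eq_one (mem_sphere_zero_iff_norm.1 hz)]
      rw [← Complex.exp_add]
      push_cast
      ring_nf
    simp only [g, hrot]
    exact harc _ (by simpa [ε] using hkz)
  have hprod : EqOn (fun w ↦ ∏ k ∈ K, g k w) 0 (closedBall 0 1) := by
    rw [← closure_ball 0 one_ne_zero]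
    refine Complex.eqOn_closure_of_eqOn_frontier isBounded_ball
      ⟨DifferentiableOn.fun_finsetProd fun k _ ↦ (hg k).differentiableOn,
        continuousOn_finsetProd K fun k _ ↦ (hg k).continuousOn⟩ diffContOnCl_const ?_
    rwa [frontier_ball 0 one_ne_zero]
  obtain ⟨k, -, hk⟩ := AnalyticOnNhd.exists_eqOn_zero_of_prod_eqOn_zero isOpen_ball
    (convex_ball 0 1).isPreconnected ⟨0, mem_ball_self one_pos⟩ K
    (fun k _ ↦ (hg k).differentiableOn.analyticOnNhd isOpen_ball)
    (hprod.mono ball_subset_closedBall)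
  intro w hw
  have hw' : exp (-(k * ε : ℝ) * I) * w ∈ ball (0 : ℂ) 1 := by
    rwa [mem_ball_zero_iff, norm_mul, ← ofReal_neg, norm_exp_ofReal_mul_I, one_mul,
      ← mem_ball_zero_iff]
  simpa [g, ← mul_assoc, ← Complex.exp_add] using hk hw'

theorem continuousOn_arg_closedBall_one {ρ : ℝ} (hρ : ρ < 1) :
    ContinuousOn arg (closedBall 1 ρ) :=
  fun w hw ↦ (continuousAt_arg (Or.inl (by
    have := (abs_re_le_norm (w - 1)).trans (mem_closedBall_iff_norm.1 hw)
    rw [sub_re, one_re, abs_le] at this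
    linarith))).continuousWithinAt

theorem IsPreconnected.exists_arc_subset_of_one_mem {E : Set ℂ} (hE : IsPreconnected E)
    (h1 : 1 ∈ E) {w₁ : ℂ} (hw₁ : w₁ ∈ E) (hw₁1 : w₁ ≠ 1) {r : ℝ} (hr : 0 < r)
    (hsphere : ∀ w ∈ E, ‖w - 1‖ < r → ‖w‖ = 1) :
    ∃ a b : ℝ, a < b ∧ ∀ t ∈ Icc a b, exp (t * I) ∈ E ∧ ‖exp (t * I) - 1‖ < r := by
  obtain ⟨ρ, hρ, hρr, hρ1⟩ : ∃ ρ : ℝ, 0 < ρ ∧ ρ < r ∧ ρ < 1 :=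
    ⟨min r 1 / 2, by positivity, by linarith [min_le_left r 1], by linarith [min_le_right r 1]⟩
  have hclose : ∀ t : ℝ, |t| ≤ ρ / 2 → ‖exp (t * I) - 1‖ < ρ := fun t ht ↦ by
    rw [mul_comm]
    exact Real.norm_exp_I_mul_ofReal_sub_one_le.trans_lt (by rw [Real.norm_eq_abs]; linarith)
  by_cases hpos : ∀ t ∈ Icc 0 (ρ / 2), exp (t * I) ∈ E
  · refine ⟨0, ρ / 2, by positivity, fun t ht ↦ ⟨hpos t ht, (hclose t ?_).trans hρr⟩⟩
    exact abs_le.2 ⟨by linarith [ht.1], ht.2⟩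
  by_cases hneg : ∀ t ∈ Icc (-(ρ / 2)) 0, exp (t * I) ∈ E
  · refine ⟨-(ρ / 2), 0, by linarith, fun t ht ↦ ⟨hneg t ht, (hclose t ?_).trans hρr⟩⟩
    exact abs_le.2 ⟨ht.1, by linarith [ht.2]⟩
  push Not at hpos hneg
  obtain ⟨β, hβ, hβE⟩ := hpos
  obtain ⟨α, hα, hαE⟩ := hneg
  have harg := continuousOn_arg_closedBall_one hρ1
  have hball_sub : ball (1 : ℂ) ρ ⊆ closedBall 1 ρ := ball_subset_closedBall
  set O := ball 1 ρ ∩ arg ⁻¹' Ioo α β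
  have hEO : E ⊆ O := by
    have hO : IsOpen O := (harg.mono hball_sub).isOpen_inter_preimage isOpen_ball isOpen_Ioo
    have h1O : 1 ∈ O := by
      have hα0 : α ≠ 0 := by rintro rfl; simp [h1] at hαE
      have hβ0 : β ≠ 0 := by rintro rfl; simp [h1] at hβE
      exact ⟨mem_ball_self hρ,
        by simpa using ⟨lt_of_le_of_ne hα.2 hα0, lt_of_le_of_ne hβ.1 hβ0.symm⟩⟩
    refine hE.subset_of_closure_inter_subset hO ⟨1, h1, h1O⟩ ?_
    rintro w ⟨hwcl, hwE⟩
    have hwC : w ∈ closedBall 1 ρ ∩ arg ⁻¹' Icc α β :=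
      closure_minimal (inter_subset_inter hball_sub (preimage_mono Ioo_subset_Icc_self))
        (harg.preimage_isClosed_of_isClosed isClosed_closedBall isClosed_Icc) hwcl
    have hw : exp (arg w * I) = w := exp_arg_mul_I_of_norm_eq_one
      (hsphere w hwE ((mem_closedBall_iff_norm.1 hwC.1).trans_lt hρr))
    have hαw : α ≠ arg w := fun h ↦ hαE (by rwa [h, hw])
    have hβw : arg w ≠ β := fun h ↦ hβE (by rwa [← h, hw])
    refine ⟨?_, lt_of_le_of_ne hwC.2.1 hαw, lt_of_le_of_ne hwC.2.2 hβw⟩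
    rw [mem_ball_iff_norm, ← hw]
    exact hclose _ (abs_le.2 ⟨by linarith [hwC.2.1, hα.1], by linarith [hwC.2.2, hβ.2]⟩)
  have hEsphere : ∀ w ∈ E, exp (arg w * I) = w := fun w hw ↦
    exp_arg_mul_I_of_norm_eq_one (hsphere w hw ((mem_ball_iff_norm.1 (hEO hw).1).trans hρr))
  have harg₁ : arg w₁ ≠ 0 := fun h ↦ hw₁1 (by simpa [h] using (hEsphere w₁ hw₁).symm)
  have himg : OrdConnected (arg '' E) :=
    (hE.image _ (harg.mono (hEO.trans (inter_subset_left.trans hball_sub)))).ordConnected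
  refine ⟨min 0 (arg w₁), max 0 (arg w₁), min_lt_max.2 harg₁.symm, fun t ht ↦ ?_⟩
  obtain ⟨w, hwE, rfl⟩ := himg.uIcc_subset ⟨1, h1, arg_one⟩ ⟨w₁, hw₁, rfl⟩ ht
  rw [hEsphere w hwE]
  exact ⟨hwE, (mem_ball_iff_norm.1 (hEO hwE).1).trans hρr⟩

theorem IsPreconnected.exists_arc_subset {E : Set ℂ} (hE : IsPreconnected E) {z₀ : ℂ}
    (hz₀ : z₀ ∈ E) (hz₀1 : ‖z₀‖ = 1) {w₁ : ℂ} (hw₁ : w₁ ∈ E) (hne : w₁ ≠ z₀) {r : ℝ}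
    (hr : 0 < r) (hsphere : ∀ w ∈ E, ‖w - z₀‖ < r → ‖w‖ = 1) :
    ∃ a b : ℝ, a < b ∧ ∀ t ∈ Icc a b, exp (t * I) ∈ E ∧ ‖exp (t * I) - z₀‖ < r := by
  have hz₀0 : z₀ ≠ 0 := by rintro rfl; simp at hz₀1
  have hdist : ∀ w, ‖z₀ * w - z₀‖ = ‖w - 1‖ := fun w ↦ by
    rw [← mul_sub_one, norm_mul, hz₀1, one_mul]
  obtain ⟨a, b, hab, harc⟩ :=
    ((Homeomorph.mulLeft₀ z₀ hz₀0).isPreconnected_preimage.2 hE).exists_arc_subset_of_one_mem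
      (w₁ := z₀⁻¹ * w₁) (by simpa using hz₀) (by simpa [mul_inv_cancel_left₀ hz₀0] using hw₁)
      (by rwa [Ne, inv_mul_eq_one₀ hz₀0, eq_comm]) hr fun w hw hwr ↦ by
        simpa [hz₀1] using hsphere _ hw (by rwa [Homeomorph.coe_mulLeft₀, hdist])
  refine ⟨arg z₀ + a, arg z₀ + b, by linarith, fun t ht ↦ ?_⟩
  have hrot : exp (t * I) = z₀ * exp ((t - arg z₀ : ℝ) * I) := calc
    exp (t * I) = exp (arg z₀ * I) * exp ((t - arg z₀ : ℝ) * I) := by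
      rw [← Complex.exp_add]
      push_cast
      ring_nf
    _ = z₀ * exp ((t - arg z₀ : ℝ) * I) := by rw [exp_arg_mul_I_of_norm_eq_one hz₀1]
  obtain ⟨hE', hr'⟩ := harc (t - arg z₀) ⟨by linarith [ht.1], by linarith [ht.2]⟩
  rw [hrot, hdist]
  exact ⟨hE', hr'⟩

theorem connected_closed_tAnalytic_diskAlgebra_general (E : Set ℂ)
    (hE : E ⊆ Metric.closedBall 0 1) (hconn : IsConnected E) :
    TAnalyticOn (Metric.closedBall 0 1) E := by
  intro f hfc hfd U hU ⟨z₀, hz₀U, hz₀E⟩ hfU x hx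
  rcases E.subsingleton_or_nontrivial with hsub | hnt
  · rw [hsub hx hz₀E]
    exact hfU z₀ ⟨hz₀U, hz₀E⟩
  have hf : DiffContOnCl ℂ f (ball 0 1) :=
    ⟨by rwa [interior_closedBall 0 one_ne_zero] at hfd, by rwa [closure_ball 0 one_ne_zero]⟩
  suffices hball : EqOn f 0 (ball 0 1) by
    rw [← closure_ball (0 : ℂ) one_ne_zero] at hE
    exact hball.of_subset_closure hf.continuousOn continuousOn_const subset_closure le_rfl (hE hx)
  by_cases hint : ∃ p ∈ U ∩ E, ‖p‖ < 1
  · obtain ⟨p, ⟨hpU, hpE⟩, hp⟩ := hint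
    have hacc : ∃ᶠ z in 𝓝[≠] p, z ∈ E :=
      accPt_iff_frequently_nhdsNE.1 (hconn.isPreconnected.preperfect_of_nontrivial hnt p hpE)
    have hfreq : ∃ᶠ z in 𝓝[≠] p, f z = 0 :=
      (hacc.and_eventually (nhdsWithin_le_nhds (hU.mem_nhds hpU))).mono
        fun z ⟨hzE, hzU⟩ ↦ hfU z ⟨hzU, hzE⟩
    exact (hf.differentiableOn.analyticOnNhd isOpen_ball)
      |>.eqOn_zero_of_preconnected_of_frequently_eq_zero (convex_ball 0 1).isPreconnected
        (mem_ball_zero_iff.2 hp) hfreq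
  push Not at hint
  obtain ⟨r, hr, hrU⟩ := Metric.isOpen_iff.1 hU z₀ hz₀U
  have hsphere : ∀ w ∈ E, ‖w - z₀‖ < r → ‖w‖ = 1 := fun w hw hwr ↦
    le_antisymm (mem_closedBall_zero_iff.1 (hE hw)) (hint w ⟨hrU (mem_ball_iff_norm.2 hwr), hw⟩)
  obtain ⟨w₁, hw₁, hne⟩ := hnt.exists_ne z₀
  obtain ⟨a, b, hab, harc⟩ := hconn.isPreconnected.exists_arc_subset hz₀E
    (hsphere z₀ hz₀E (by simpa using hr)) hw₁ hne hr hsphere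
  exact hf.eqOn_zero_of_forall_exp_mul_I_eq_zero hab fun t ht ↦
    hfU _ ⟨hrU (mem_ball_iff_norm.2 (harc t ht).2), (harc t ht).1⟩

theorem connected_closed_tAnalytic_diskAlgebra (E : Set ℂ)
    (hE : E ⊆ Metric.closedBall 0 1) (hclosed : IsClosed E) (hconn : IsConnected E) :
    TAnalyticOn (Metric.closedBall 0 1) E :=
  connected_closed_tAnalytic_diskAlgebra_general E hE hconn
end

section
/- Let A = A(X) where X = {z : |z| ≤ 1} ∪ {z : |z−2| ≤ 1} (two closed disks touching at 1), the algebra of continuous functions on X holomorphic on the interior of X. Then each closed disk X₁ = {|z| ≤ 1} and X₂ = {|z−2| ≤ 1} is a t-analytic set for A, but X₁ ∪ X₂ = X is not t-analytic for A. -/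
/-!
A closed disk inside `K` is the closure of a connected open subset of `interior K`, so the
identity theorem spreads a local zero over the open disk and continuity carries it to the
boundary. For the union `X` the two disks meet only at `1`, and the line `re z = 1` meets `X`
only there; hence `z - 1` to the left of that line and `0` to its right is continuous on `X`
and holomorphic off the line, in particular on `interior X`. It vanishes on the right disk but
not at `0`.
-/

open Set Complex

open Metric

theorem tAnalyticOn_closure_of_isPreconnected {K U : Set ℂ} (hU : IsOpen U)
    (hU' : IsPreconnected U) (hUK : closure U ⊆ K) : TAnalyticOn K (closure U) := by
  intro f hfc hfd V hV hne hzero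
  obtain ⟨z₀, hz₀U, hz₀V⟩ := (closure_inter_open_nonempty_iff hV).mp (inter_comm V _ ▸ hne)
  have hfa : AnalyticOnNhd ℂ f U :=
    (hfd.mono (interior_maximal (subset_closure.trans hUK) hU)).analyticOnNhd hU
  have hf₀ : f =ᶠ[nhds z₀] 0 := by
    filter_upwards [hV.mem_nhds hz₀V, hU.mem_nhds hz₀U] with x hxV hxU
    exact hzero x ⟨hxV, subset_closure hxU⟩
  exact (hfa.eqOn_zero_of_preconnected_of_eventuallyEq_zero hU' hz₀U hf₀).of_subset_closure
    (hfc.mono hUK) continuousOn_const subset_closure subset_rfl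

theorem tAnalyticOn_closedBall {K : Set ℂ} {c : ℂ} {r : ℝ} (hr : r ≠ 0)
    (hK : closedBall c r ⊆ K) : TAnalyticOn K (closedBall c r) := by
  rw [← closure_ball c hr] at hK ⊢
  exact tAnalyticOn_closure_of_isPreconnected isOpen_ball (convex_ball c r).isPreconnected hK

namespace Complex

theorem eq_add_of_mem_closedBall_of_le_re {c z : ℂ} {r : ℝ} (hz : z ∈ closedBall c r)
    (hre : c.re + r ≤ z.re) : z = c + r := by
  have hnorm : ‖z - c‖ ≤ r := by rwa [← dist_eq]
  have hw : (z - c).re = ‖z - c‖ := by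
    have := re_le_norm (z - c)
    rw [sub_re] at this ⊢
    linarith
  obtain ⟨-, him⟩ := nonneg_iff.mp (re_eq_norm.mp hw)
  apply Complex.ext <;> simp at hw him ⊢ <;> linarith

theorem eq_sub_of_mem_closedBall_of_re_le {c z : ℂ} {r : ℝ} (hz : z ∈ closedBall c r)
    (hre : z.re ≤ c.re - r) : z = c - r := by
  have hneg : -z ∈ closedBall (-c) r := by rwa [mem_closedBall, dist_neg_neg]
  have := eq_add_of_mem_closedBall_of_le_re hneg (by simp only [neg_re]; linarith)
  linear_combination -this

theorem re_sub_le_of_mem_closedBall {c z : ℂ} {r : ℝ} (hz : z ∈ closedBall c r) :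
    c.re - r ≤ z.re := by
  have h := (abs_le.mp ((abs_re_le_norm (z - c)).trans (dist_eq z c ▸ mem_closedBall.mp hz))).1
  rw [sub_re] at h
  linarith

theorem re_ne_of_mem_interior {S : Set ℂ} {a : ℝ} (hS : (S ∩ {z | z.re = a}).Subsingleton)
    {z : ℂ} (hz : z ∈ interior S) : z.re ≠ a := by
  intro hza
  set φ : ℝ → ℂ := fun t => z + t * I
  have hφ : Continuous φ := by fun_prop
  have hsub : φ ⁻¹' interior S = {0} := by
    refine Subset.antisymm (fun t ht => ?_) (by simpa [φ] using hz)
    have h := hS ⟨interior_subset ht, by simp [φ, hza]⟩ ⟨interior_subset hz, hza⟩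
    simpa [φ, I_ne_zero] using h
  exact not_isOpen_singleton (0 : ℝ) (hsub ▸ isOpen_interior.preimage hφ)

end Complex

theorem eq_one_of_mem_kissingDisks {z : ℂ} (hz : z ∈ closedBall 0 1 ∪ closedBall 2 1)
    (hre : z.re = 1) : z = 1 := by
  rcases hz with hz | hz
  · simpa using eq_add_of_mem_closedBall_of_le_re hz (by simp [hre])
  · have := eq_sub_of_mem_closedBall_of_re_le hz (by norm_num [hre])
    rw [this]
    norm_num

noncomputable def kissingWitness (z : ℂ) : ℂ := if z.re < 1 then z - 1 else 0

theorem kissingWitness_of_one_le_re {z : ℂ} (hz : 1 ≤ z.re) : kissingWitness z = 0 :=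
  if_neg hz.not_gt

theorem kissingWitness_eqOn_closedBall_two : EqOn kissingWitness 0 (closedBall 2 1) :=
  fun z hz => kissingWitness_of_one_le_re <| by
    have := re_sub_le_of_mem_closedBall hz
    norm_num at this
    exact this

theorem continuousOn_kissingWitness :
    ContinuousOn kissingWitness (closedBall 0 1 ∪ closedBall 2 1) := by
  refine .union_of_isClosed ?_ ?_ isClosed_closedBall isClosed_closedBall
  · refine (continuous_sub_right (1 : ℂ)).continuousOn.congr fun z hz => ?_
    by_cases hre : z.re < 1
    · simp [kissingWitness, hre]
    · have := eq_add_of_mem_closedBall_of_le_re hz (by simpa using hre)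
      simp_all [kissingWitness]
  · exact continuousOn_const.congr kissingWitness_eqOn_closedBall_two

theorem differentiableAt_kissingWitness {z : ℂ} (hz : z.re ≠ 1) :
    DifferentiableAt ℂ kissingWitness z := by
  rcases hz.lt_or_gt with h | h
  · refine (differentiableAt_id.sub_const 1).congr_of_eventuallyEq ?_
    filter_upwards [(isOpen_lt continuous_re continuous_const).mem_nhds h] with w hw
    exact if_pos hw
  · refine (differentiableAt_const 0).congr_of_eventuallyEq ?_
    filter_upwards [(isOpen_lt continuous_const continuous_re).mem_nhds h] with w hw
    exact kissingWitness_of_one_le_re hw.le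

theorem differentiableOn_kissingWitness :
    DifferentiableOn ℂ kissingWitness (interior (closedBall 0 1 ∪ closedBall 2 1)) :=
  fun _ hz => (differentiableAt_kissingWitness <| re_ne_of_mem_interior
    (subsingleton_singleton.anti fun _ hw => eq_one_of_mem_kissingDisks hw.1 hw.2) hz
    ).differentiableWithinAt

theorem kissing_disks_tAnalytic :
    TAnalyticOn (Metric.closedBall 0 1 ∪ Metric.closedBall 2 1) (Metric.closedBall 0 1) ∧
    TAnalyticOn (Metric.closedBall 0 1 ∪ Metric.closedBall 2 1) (Metric.closedBall 2 1) ∧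
    ¬ TAnalyticOn (Metric.closedBall 0 1 ∪ Metric.closedBall 2 1)
        (Metric.closedBall 0 1 ∪ Metric.closedBall 2 1) := by
  refine ⟨tAnalyticOn_closedBall one_ne_zero subset_union_left,
    tAnalyticOn_closedBall one_ne_zero subset_union_right, fun h => ?_⟩
  have := h kissingWitness continuousOn_kissingWitness differentiableOn_kissingWitness
    (ball 2 1) isOpen_ball
    ⟨2, mem_ball_self one_pos, .inr (mem_closedBall_self zero_le_one)⟩
    (fun z hz => kissingWitness_eqOn_closedBall_two (ball_subset_closedBall hz.1)) 0
    (.inl (mem_closedBall_self zero_le_one))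
  norm_num [kissingWitness] at this
end
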